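/- arXiv:1101.1937 — 3 statements merged into one kernel-verified Lean document; each statement's English description precedes it below -/
import Mathlib

section
/- Let G be a group such that [u, vⁿ] = u v^n u⁻¹ v⁻ⁿ lies in the center Z(G) for all u, v ∈ G. Define a ∘ b = b a b⁻¹ and a ⋆ b = b^(n+1) a b^(-(n+1)). Then for all x, a, b ∈ G, x ∘ (a ∘ b) = x ∘ (a ⋆ b), i.e., conjugation by a ∘ b equals conjugation by a ⋆ b. -/
/-!
Put `z = ⁅a, bⁿ⁆`. Then `bⁿ a b⁻ⁿ = z⁻¹ a`, and since `z` is central, conjugating by `b` gives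
`a ⋆ b = z⁻¹ (a ∘ b)`. Conjugation by `z⁻¹ c` is conjugation by `c` when `z` is central.
-/

open scoped commutatorElement

namespace Subgroup

variable {G : Type*} [Group G]

theorem conj_mul_of_mem_center {z : G} (hz : z ∈ center G) (c x : G) :
    z * c * x * (z * c)⁻¹ = c * x * c⁻¹ := by
  have hzx : z * (c * x * c⁻¹) = c * x * c⁻¹ * z := (mem_center_iff.mp hz _).symm
  calc z * c * x * (z * c)⁻¹ = z * (c * x * c⁻¹) * z⁻¹ := by group
    _ = c * x * c⁻¹ := by rw [hzx, mul_inv_cancel_right]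

theorem conj_mul_conj_of_commutatorElement_mem_center {a c : G} (hz : ⁅a, c⁆ ∈ center G)
    (b : G) : b * c * a * (b * c)⁻¹ = ⁅a, c⁆⁻¹ * (b * a * b⁻¹) := by
  have hcomm : b * ⁅a, c⁆⁻¹ = ⁅a, c⁆⁻¹ * b := mem_center_iff.mp (inv_mem hz) b
  calc b * c * a * (b * c)⁻¹ = b * ⁅a, c⁆⁻¹ * (a * b⁻¹) := by
        simp only [commutatorElement_def]; group
    _ = ⁅a, c⁆⁻¹ * (b * a * b⁻¹) := by rw [hcomm]; group

end Subgroup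

/-- If every commutator `[u, vⁿ] = u * vⁿ * u⁻¹ * v⁻ⁿ` is central, then with
`a ∘ b = b * a * b⁻¹` and `a ⋆ b = b^(n+1) * a * b^(-(n+1))`, conjugation by
`a ∘ b` equals conjugation by `a ⋆ b`: `x ∘ (a ∘ b) = x ∘ (a ⋆ b)`. -/
theorem strange_relation_conj {G : Type*} [Group G] (n : ℕ)
    (h : ∀ u v : G, u * v ^ n * u⁻¹ * (v ^ n)⁻¹ ∈ Subgroup.center G)
    (x a b : G) :
    (b * a * b⁻¹) * x * (b * a * b⁻¹)⁻¹ =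
      (b ^ (n + 1) * a * (b ^ (n + 1))⁻¹) * x * (b ^ (n + 1) * a * (b ^ (n + 1))⁻¹)⁻¹ := by
  have hz : ⁅a, b ^ n⁆ ∈ Subgroup.center G := h a b
  rw [pow_succ', Subgroup.conj_mul_conj_of_commutatorElement_mem_center hz,
    Subgroup.conj_mul_of_mem_center (Subgroup.inv_mem _ hz)]
end

section
/- Let G be a group such that [u, vⁿ] ∈ Z(G) for all u, v ∈ G. Define a ⋆ b = b^(n+1) a b^(-(n+1)) and let a /⋆ b = b^(-(n+1)) a b^(n+1) denote its right inverse operation. Then for all x, a, b ∈ G, conjugation of x by a /∘ b equals conjugation of x by a /⋆ b, where a /∘ b = b⁻¹ a b. -/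
/-!
Write `z = a⁻¹ b⁻ⁿ a bⁿ`, a commutator of the form `[u, vⁿ]`, hence central. Then
`b^(-(n+1)) a b^(n+1) = b⁻¹ (a z) b = (b⁻¹ a b) z`, so the two elements `a /⋆ b` and `a /∘ b`
differ by a central factor and therefore induce the same inner automorphism.
-/

theorem conj_mul_of_mem_center {G : Type*} [Group G] {z : G} (hz : z ∈ Subgroup.center G)
    (g x : G) : g * z * x * (g * z)⁻¹ = g * x * g⁻¹ := by
  have hzx : z * x = x * z := (Subgroup.mem_center_iff.mp hz x).symm
  calc g * z * x * (g * z)⁻¹ = g * (z * x) * z⁻¹ * g⁻¹ := by group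
    _ = g * x * g⁻¹ := by rw [hzx]; group

/-- If every commutator `[u, vⁿ]` is central, then with `a /∘ b = b⁻¹ * a * b`
and `a /⋆ b = b^(-(n+1)) * a * b^(n+1)`, conjugation of `x` by `a /∘ b` equals
conjugation of `x` by `a /⋆ b`. -/
theorem strange_relation_inv_conj {G : Type*} [Group G] (n : ℕ)
    (h : ∀ u v : G, u * v ^ n * u⁻¹ * (v ^ n)⁻¹ ∈ Subgroup.center G)
    (x a b : G) :
    (b⁻¹ * a * b) * x * (b⁻¹ * a * b)⁻¹ =
      ((b ^ (n + 1))⁻¹ * a * b ^ (n + 1)) * x * ((b ^ (n + 1))⁻¹ * a * b ^ (n + 1))⁻¹ := by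
  set z := a⁻¹ * (b ^ n)⁻¹ * a * b ^ n
  have hz : z ∈ Subgroup.center G := by simpa only [inv_inv, inv_pow] using h a⁻¹ b⁻¹
  have hzb : b * z = z * b := Subgroup.mem_center_iff.mp hz b
  have hstar : (b ^ (n + 1))⁻¹ * a * b ^ (n + 1) = b⁻¹ * a * b * z :=
    calc (b ^ (n + 1))⁻¹ * a * b ^ (n + 1) = b⁻¹ * a * (z * b) := by
          simp only [z, pow_succ]; group
      _ = b⁻¹ * a * b * z := by rw [← hzb]; group
  rw [hstar, conj_mul_of_mem_center hz]
end

section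
/- Let G be a group in which every element can be written as aᵏbˡ for generators a, b, and suppose that for all x, y ∈ G with x = aᵏbˡ and y = aⁱbʲ, the commutator [x, y²] is central in G. Then the quandle operations x ∘ y = y x y⁻¹ and x ⋆ y = y³ x y⁻³ satisfy x ∘ (u ∘ v) = x ∘ (u ⋆ v) for all x, u, v ∈ G. -/
/-- Let `G` be a group generated (as products of powers) by two elements `a, b`,
in which every commutator `[x, y²]` is central. Then for `x ∘ y = y * x * y⁻¹`
and `x ⋆ y = y³ * x * y⁻³`, we have `x ∘ (u ∘ v) = x ∘ (u ⋆ v)`. -/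
theorem strange_relation_n2 {G : Type*} [Group G] (a b : G)
    (hgen : ∀ g : G, ∃ k l : ℤ, g = a ^ k * b ^ l)
    (hc : ∀ x y : G, x * y ^ 2 * x⁻¹ * (y ^ 2)⁻¹ ∈ Subgroup.center G)
    (x u v : G) :
    (v * u * v⁻¹) * x * (v * u * v⁻¹)⁻¹ =
      (v ^ 3 * u * (v ^ 3)⁻¹) * x * (v ^ 3 * u * (v ^ 3)⁻¹)⁻¹ := by
  set c : G := u * v ^ 2 * u⁻¹ * (v ^ 2)⁻¹ with hcdef
  have hcomm : ∀ g : G, g * c = c * g := Subgroup.mem_center_iff.mp (hc u v)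
  have hv : v * c⁻¹ = c⁻¹ * v := (Commute.inv_right (hcomm v)).eq
  have hcinv : c⁻¹ = v ^ 2 * u * (v ^ 2)⁻¹ * u⁻¹ := by rw [hcdef]; group
  have h1 : v ^ 3 * u * (v ^ 3)⁻¹ = c⁻¹ * (v * u * v⁻¹) := by
    rw [show c⁻¹ * (v * u * v⁻¹) = c⁻¹ * v * u * v⁻¹ by group, ← hv, hcinv]; group
  rw [h1]
  have hs := hcomm ((v * u * v⁻¹) * x * (v * u * v⁻¹)⁻¹)
  apply mul_left_cancel (a := c)
  calc c * ((v * u * v⁻¹) * x * (v * u * v⁻¹)⁻¹)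
      = (v * u * v⁻¹) * x * (v * u * v⁻¹)⁻¹ * c := hs.symm
    _ = c * (c⁻¹ * (v * u * v⁻¹) * x * (c⁻¹ * (v * u * v⁻¹))⁻¹) := by group
end
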